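/- arXiv:1304.2444 — 2 statements merged into one kernel-verified Lean document; each statement's English description precedes it below -/
import Mathlib

section
/- For a two-round interactive communication, i.e., F = (F₁, F₂) where F₁ = f₁(X) and F₂ = f₂(Y, F₁) for deterministic functions f₁, f₂ and independent-mechanism-free random variables X, Y, it holds that H(F | X) + H(F | Y) ≤ H(F). -/
open scoped Classical
open Finset Real

noncomputable section

variable {Ω : Type*} [Fintype Ω]

/-- Pushforward probability of value `x` under random variable `X` w.r.t. pmf `p`. -/
def dist' {α : Type*} (p : Ω → ℝ) (X : Ω → α) (x : α) : ℝ :=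
  ∑ ω, if X ω = x then p ω else 0

/-- Shannon entropy, base 2. -/
def ent {α : Type*} [Fintype α] (p : Ω → ℝ) (X : Ω → α) : ℝ :=
  -∑ x, dist' p X x * Real.logb 2 (dist' p X x)

/-- Conditional entropy `H(X | Y)`. -/
def condEnt {α β : Type*} [Fintype α] [Fintype β] (p : Ω → ℝ) (X : Ω → α) (Y : Ω → β) : ℝ :=
  ent p (fun ω => (X ω, Y ω)) - ent p Y

/-- Mutual information `I(X ∧ Y)`. -/
def mi {α β : Type*} [Fintype α] [Fintype β] (p : Ω → ℝ) (X : Ω → α) (Y : Ω → β) : ℝ :=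
  ent p X + ent p Y - ent p (fun ω => (X ω, Y ω))

/-- Conditional mutual information `I(X ∧ Y | Z)`. -/
def cmi {α β γ : Type*} [Fintype α] [Fintype β] [Fintype γ]
    (p : Ω → ℝ) (X : Ω → α) (Y : Ω → β) (Z : Ω → γ) : ℝ :=
  ent p (fun ω => (X ω, Z ω)) + ent p (fun ω => (Y ω, Z ω))
    - ent p (fun ω => ((X ω, Y ω), Z ω)) - ent p Z

/-- `p` is a probability mass function on `Ω`. -/
def IsPMF (p : Ω → ℝ) : Prop := (∀ ω, 0 ≤ p ω) ∧ ∑ ω, p ω = 1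

/-!
Since `F₁` is a function of `X`, conditioning on `X` rather than on `F₁` can only lower entropy,
so `H(F | X) ≤ H(F | F₁) = H(F) - H(F₁)`. Since `F` is a function of `(F₁, Y)`,
`H(F | Y) = H(F₁ | Y) ≤ H(F₁)`. Adding the two bounds gives the claim. Both inequalities are
instances of the nonnegativity of conditional mutual information, which follows from
Gibbs' inequality.
-/

section

variable {α β γ : Type*}

lemma dist'_nonneg {p : Ω → ℝ} (hp : ∀ ω, 0 ≤ p ω) (X : Ω → α) (x : α) : 0 ≤ dist' p X x :=
  sum_nonneg fun ω _ => by split_ifs <;> simp [hp ω]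

lemma sum_dist' [Fintype α] (p : Ω → ℝ) (X : Ω → α) : ∑ x, dist' p X x = ∑ ω, p ω := by
  simp only [dist']
  rw [sum_comm]
  simp

lemma dist'_comp [Fintype α] (p : Ω → ℝ) (T : Ω → α) (s : α → β) (b : β) :
    dist' p (fun ω => s (T ω)) b = ∑ a with s a = b, dist' p T a := by
  simp only [dist', ← sum_filter]
  rw [← sum_fiberwise_of_maps_to (g := T) (t := {a | s a = b}) (fun ω hω => by simpa using hω)]
  refine sum_congr rfl fun a ha => ?_
  congr 1
  ext
  simp_all

lemma dist'_le_dist'_comp [Fintype α] {p : Ω → ℝ} (hp : ∀ ω, 0 ≤ p ω) (T : Ω → α) (s : α → β)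
    (a : α) : dist' p T a ≤ dist' p (fun ω => s (T ω)) (s a) := by
  rw [dist'_comp p T s]
  exact single_le_sum (fun a' _ => dist'_nonneg hp T a') (mem_filter.2 ⟨mem_univ a, rfl⟩)

lemma sum_dist'_pair_fst [Fintype α] (p : Ω → ℝ) (X : Ω → α) (Z : Ω → γ) (c : γ) :
    ∑ a, dist' p (fun ω => (X ω, Z ω)) (a, c) = dist' p Z c := by
  simp only [dist', Prod.mk.injEq, ite_and]
  rw [sum_comm]
  simp

lemma ent_comp_of_injective [Fintype α] [Fintype β] (p : Ω → ℝ) (X : Ω → α) {g : α → β}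
    (hg : g.Injective) : ent p (fun ω => g (X ω)) = ent p X := by
  have hz : ∀ b ∉ Set.range g, dist' p (fun ω => g (X ω)) b = 0 := fun b hb =>
    sum_eq_zero fun ω _ => if_neg fun h => hb ⟨X ω, h⟩
  refine congrArg Neg.neg (Fintype.sum_of_injective g hg _ _ (fun b hb => by simp [hz b hb])
    fun a => ?_).symm
  simp [dist', hg.eq_iff]

lemma ent_comp_eq_sum [Fintype α] [Fintype β] (p : Ω → ℝ) (T : Ω → α) (s : α → β) :
    ent p (fun ω => s (T ω))
      = -∑ a, dist' p T a * logb 2 (dist' p (fun ω => s (T ω)) (s a)) := by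
  rw [ent, ← sum_fiberwise (g := s)]
  refine congrArg _ (sum_congr rfl fun b _ => ?_)
  nth_rw 1 [dist'_comp]
  rw [sum_mul]
  exact sum_congr rfl fun a ha => by rw [(mem_filter.1 ha).2]

lemma sub_div_log_two_le_mul_logb {d x y z : ℝ} (hd : 0 ≤ d) (hx : d ≤ x) (hy : d ≤ y)
    (hz : d ≤ z) : (d - x * y / z) / log 2 ≤ d * (logb 2 d + logb 2 z - logb 2 x - logb 2 y) := by
  have hlog2 : 0 < log 2 := log_pos one_lt_two
  rcases hd.eq_or_lt with rfl | hd
  · rw [zero_sub, zero_mul, neg_div, neg_nonpos]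
    exact div_nonneg (div_nonneg (mul_nonneg hx hy) hz) hlog2.le
  have hx := hd.trans_le hx
  have hy := hd.trans_le hy
  have hz := hd.trans_le hz
  have hq : 0 < x * y / z := by positivity
  have gibbs : d - x * y / z ≤ d * log (d / (x * y / z)) := by
    have := mul_le_mul_of_nonneg_left (one_sub_inv_le_log_of_pos (div_pos hd hq)) hd.le
    rwa [inv_div, mul_sub, mul_one, mul_div_cancel₀ _ hd.ne'] at this
  rw [log_div hd.ne' hq.ne', log_div (by positivity) hz.ne', log_mul hx.ne' hy.ne'] at gibbs
  calc (d - x * y / z) / log 2 ≤ d * (log d - (log x + log y - log z)) / log 2 := by gcongr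
    _ = _ := by simp only [logb]; ring

lemma sum_mul_div_dist' [Fintype α] [Fintype β] [Fintype γ] (p : Ω → ℝ) (X : Ω → α)
    (Y : Ω → β) (Z : Ω → γ) :
    ∑ t : (α × β) × γ, dist' p (fun ω => (X ω, Z ω)) (t.1.1, t.2)
      * dist' p (fun ω => (Y ω, Z ω)) (t.1.2, t.2) / dist' p Z t.2 = ∑ ω, p ω := by
  rw [← sum_dist' p Z, Fintype.sum_prod_type_right]
  refine sum_congr rfl fun c _ => ?_
  calc _ = (∑ a, dist' p (fun ω => (X ω, Z ω)) (a, c))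
        * (∑ b, dist' p (fun ω => (Y ω, Z ω)) (b, c)) / dist' p Z c := by
        simp_rw [Fintype.sum_prod_type, sum_mul_sum, sum_div]
    _ = dist' p Z c := by rw [sum_dist'_pair_fst, sum_dist'_pair_fst, mul_self_div_self]

/-- `I(X ∧ Y | Z) = ∑ d log (d / q)` with `d = P(x, y, z)` and `q = P(x, z) P(y, z) / P(z)`,
and `q` has the same total mass as `d`, so `log t ≤ t - 1` applies termwise. -/
lemma cmi_nonneg [Fintype α] [Fintype β] [Fintype γ] {p : Ω → ℝ} (hp : ∀ ω, 0 ≤ p ω)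
    (X : Ω → α) (Y : Ω → β) (Z : Ω → γ) : 0 ≤ cmi p X Y Z := by
  set T := fun ω => ((X ω, Y ω), Z ω)
  set dXZ := dist' p (fun ω => (X ω, Z ω))
  set dYZ := dist' p (fun ω => (Y ω, Z ω))
  set dZ := dist' p Z
  have hXZ : ent p (fun ω => (X ω, Z ω))
      = -∑ t, dist' p T t * logb 2 (dXZ (t.1.1, t.2)) :=
    ent_comp_eq_sum p T (fun t => (t.1.1, t.2))
  have hYZ : ent p (fun ω => (Y ω, Z ω))
      = -∑ t, dist' p T t * logb 2 (dYZ (t.1.2, t.2)) :=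
    ent_comp_eq_sum p T (fun t => (t.1.2, t.2))
  have hZ : ent p Z = -∑ t, dist' p T t * logb 2 (dZ t.2) := ent_comp_eq_sum p T Prod.snd
  have expand : cmi p X Y Z = ∑ t, dist' p T t * (logb 2 (dist' p T t) + logb 2 (dZ t.2)
      - logb 2 (dXZ (t.1.1, t.2)) - logb 2 (dYZ (t.1.2, t.2))) := by
    rw [cmi, hXZ, hYZ, hZ]
    simp only [ent, mul_add, mul_sub, sum_add_distrib, sum_sub_distrib]
    ring
  calc 0 = ∑ t, (dist' p T t - dXZ (t.1.1, t.2) * dYZ (t.1.2, t.2) / dZ t.2) / log 2 := by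
        rw [← sum_div, sum_sub_distrib, sum_dist', sum_mul_div_dist', sub_self, zero_div]
    _ ≤ _ := sum_le_sum fun t _ => sub_div_log_two_le_mul_logb (dist'_nonneg hp T t)
        (dist'_le_dist'_comp hp T (fun t => (t.1.1, t.2)) t)
        (dist'_le_dist'_comp hp T (fun t => (t.1.2, t.2)) t) (dist'_le_dist'_comp hp T Prod.snd t)
    _ = cmi p X Y Z := expand.symm

lemma ent_pair_comp [Fintype α] [Fintype β] (p : Ω → ℝ) (X : Ω → α) (g : α → β) :
    ent p (fun ω => (X ω, g (X ω))) = ent p X :=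
  ent_comp_of_injective p X (g := fun a => (a, g a)) fun _ _ h => congrArg Prod.fst h

lemma condEnt_le_condEnt_comp [Fintype α] [Fintype β] [Fintype γ] {p : Ω → ℝ}
    (hp : ∀ ω, 0 ≤ p ω) (U : Ω → α) (X : Ω → β) (g : β → γ) :
    condEnt p U X ≤ condEnt p U (fun ω => g (X ω)) := by
  have hUX : ent p (fun ω => ((U ω, X ω), g (X ω))) = ent p (fun ω => (U ω, X ω)) :=
    ent_pair_comp p (fun ω => (U ω, X ω)) (fun t => g t.2)
  have h := cmi_nonneg hp U X (fun ω => g (X ω))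
  rw [cmi, ent_pair_comp p X g, hUX] at h
  rw [condEnt, condEnt]
  linarith

lemma ent_const {p : Ω → ℝ} (hp : ∑ ω, p ω = 1) : ent p (fun _ => ()) = 0 := by
  simp [ent, dist', hp]

lemma condEnt_le_ent [Fintype α] [Fintype β] {p : Ω → ℝ} (hp : IsPMF p) (U : Ω → α)
    (Y : Ω → β) : condEnt p U Y ≤ ent p U :=
  calc condEnt p U Y ≤ condEnt p U (fun _ => ()) := condEnt_le_condEnt_comp hp.1 U Y fun _ => ()
    _ = ent p U := by rw [condEnt, ent_pair_comp p U fun _ => (), ent_const hp.2, sub_zero]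

end

/-- For a two-round interactive communication `F = (f₁(X), f₂(Y, f₁(X)))`:
`H(F|X) + H(F|Y) ≤ H(F)`. -/
theorem stmt1 {Ω 𝒳 𝒴 ℱ₁ ℱ₂ : Type*} [Fintype Ω] [Fintype 𝒳] [Fintype 𝒴]
    [Fintype ℱ₁] [Fintype ℱ₂]
    (p : Ω → ℝ) (hp : IsPMF p) (X : Ω → 𝒳) (Y : Ω → 𝒴)
    (f₁ : 𝒳 → ℱ₁) (f₂ : 𝒴 → ℱ₁ → ℱ₂) :
    condEnt p (fun ω => (f₁ (X ω), f₂ (Y ω) (f₁ (X ω)))) X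
      + condEnt p (fun ω => (f₁ (X ω), f₂ (Y ω) (f₁ (X ω)))) Y
      ≤ ent p (fun ω => (f₁ (X ω), f₂ (Y ω) (f₁ (X ω)))) := by
  set F₁ := fun ω => f₁ (X ω)
  set F := fun ω => (F₁ ω, f₂ (Y ω) (F₁ ω))
  have hX : condEnt p F X ≤ ent p F - ent p F₁ :=
    calc condEnt p F X ≤ condEnt p F F₁ := condEnt_le_condEnt_comp hp.1 F X f₁
      _ = ent p F - ent p F₁ := by rw [condEnt, ent_pair_comp p F Prod.fst]
  have hY : condEnt p F Y = condEnt p F₁ Y := by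
    rw [condEnt, condEnt, ← ent_comp_of_injective p (fun ω => (F₁ ω, Y ω))
      (g := fun t => ((t.1, f₂ t.2 t.1), t.2)) fun a b h => by grind]
  linarith [condEnt_le_ent hp F₁ Y]
end
end

section
/- Under the same interactive Markov conditions (U_{2i+1} → (X,U^{2i}) → Y, U_{2i} → (Y,U^{2i-1}) → X, and X → U^r → Y), it holds that Σ_{i odd} I(Y ∧ U_i | U^{i−1}) + Σ_{i even} I(X ∧ U_i | U^{i−1}) = I(X ∧ Y). -/
open scoped Classical
open Finset Real

noncomputable section

variable {Ω : Type*} [Fintype Ω]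

/-- The prefix `U^i = (U_1, ..., U_i)` of an interactive sequence. -/
def pre {𝒰 : Type*} {r : ℕ} (U : Fin r → Ω → 𝒰) (i : ℕ) (h : i ≤ r) :
    Ω → (Fin i → 𝒰) :=
  fun ω k => U (Fin.castLE h k) ω

/-- Condition (P1): interactive Markov conditions.  Index `j : Fin r` corresponds to the
`(j+1)`-st message; messages with odd 1-based index (`Even j.val`) are sent by terminal 𝒳. -/
def P1cond {𝒳 𝒴 𝒰 : Type*} [Fintype 𝒳] [Fintype 𝒴] [Fintype 𝒰] {r : ℕ}
    (p : Ω → ℝ) (X : Ω → 𝒳) (Y : Ω → 𝒴) (U : Fin r → Ω → 𝒰) : Prop :=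
  ∀ j : Fin r,
    (Even j.val → cmi p (U j) Y (fun ω => (X ω, pre U j.val j.isLt.le ω)) = 0) ∧
    (¬ Even j.val → cmi p (U j) X (fun ω => (Y ω, pre U j.val j.isLt.le ω)) = 0)

/-- Condition (P2): `X -∘- U^r -∘- Y`. -/
def P2cond {𝒳 𝒴 𝒰 : Type*} [Fintype 𝒳] [Fintype 𝒴] [Fintype 𝒰] {r : ℕ}
    (p : Ω → ℝ) (X : Ω → 𝒳) (Y : Ω → 𝒴) (U : Fin r → Ω → 𝒰) : Prop :=
  cmi p X Y (pre U r le_rfl) = 0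

/-
Write `I_k = I(X ∧ Y | U^k)`, so that `I_0 = I(X ∧ Y)` and `I_r = 0` by the Markov chain
`X → U^r → Y`. The chain rule applied to `I((X, U_{k+1}) ∧ Y | U^k)` in its two orders gives
`I_k = I(Y ∧ U_{k+1} | U^k) + I_{k+1}` as soon as `U_{k+1} → (X, U^k) → Y`, and symmetrically
`I_k = I(X ∧ U_{k+1} | U^k) + I_{k+1}` when `U_{k+1} → (Y, U^k) → X`. The sum therefore
telescopes to `I_0 - I_r = I(X ∧ Y)`.
-/

section Entropy

variable (p : Ω → ℝ)

lemma dist'_comp_of_injective {α β : Type*} {f : α → β} (hf : Function.Injective f)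
    (W : Ω → α) (x : α) : dist' p (fun ω => f (W ω)) (f x) = dist' p W x := by
  simp only [dist', hf.eq_iff]

lemma ent_eq_of_injective {α β : Type*} [Fintype α] [Fintype β] {f : α → β}
    (hf : Function.Injective f) {V : Ω → β} {W : Ω → α} (hV : ∀ ω, V ω = f (W ω)) :
    ent p V = ent p W := by
  obtain rfl : V = fun ω => f (W ω) := funext hV
  have hzero : ∀ y ∉ Set.range f, dist' p (fun ω => f (W ω)) y = 0 := fun y hy =>
    Finset.sum_eq_zero fun ω _ => if_neg fun h => hy ⟨W ω, h⟩
  unfold ent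
  congr 1
  refine (Fintype.sum_of_injective f hf _ _ (fun y hy => ?_) fun x => ?_).symm
  · simp [hzero y hy]
  · rw [dist'_comp_of_injective p hf]

lemma ent_eq_zero_of_unique {γ : Type*} [Fintype γ] [Unique γ] (hp : ∑ ω, p ω = 1)
    (Z : Ω → γ) : ent p Z = 0 := by
  have hdefault : dist' p Z default = 1 := by
    rw [← hp]
    exact Finset.sum_congr rfl fun ω _ => if_pos (Subsingleton.elim _ _)
  simp [ent, hdefault]

end Entropy

section InformationMeasures

variable (p : Ω → ℝ) {α β γ δ : Type*} [Fintype α] [Fintype β] [Fintype γ] [Fintype δ]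

lemma ent_prod_unique_right [Unique γ] (V : Ω → α) (Z : Ω → γ) :
    ent p (fun ω => (V ω, Z ω)) = ent p V :=
  ent_eq_of_injective p (f := fun v => (v, default)) (fun _ _ h => congrArg Prod.fst h)
    fun ω => by rw [Subsingleton.elim (Z ω) default]

lemma ent_prod_congr_right {f : γ → δ} (hf : Function.Injective f) (V : Ω → α) {Z' : Ω → δ}
    {Z : Ω → γ} (hZ : ∀ ω, Z' ω = f (Z ω)) :
    ent p (fun ω => (V ω, Z' ω)) = ent p (fun ω => (V ω, Z ω)) :=
  ent_eq_of_injective p (Function.injective_id.prodMap hf) fun ω => by rw [hZ]; rfl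

lemma cmi_eq_mi_of_unique [Unique γ] (hp : ∑ ω, p ω = 1) (X : Ω → α) (Y : Ω → β)
    (Z : Ω → γ) : cmi p X Y Z = mi p X Y := by
  simp only [cmi, mi, ent_prod_unique_right, ent_eq_zero_of_unique p hp Z]
  ring

lemma cmi_comm (X : Ω → α) (Y : Ω → β) (Z : Ω → γ) : cmi p X Y Z = cmi p Y X Z := by
  have hswap : ent p (fun ω => ((Y ω, X ω), Z ω)) = ent p (fun ω => ((X ω, Y ω), Z ω)) :=
    ent_eq_of_injective p (Prod.swap_injective.prodMap Function.injective_id) fun _ => rfl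
  simp only [cmi, hswap]
  ring

lemma cmi_congr_left {f : α → δ} (hf : Function.Injective f) {X' : Ω → δ} {X : Ω → α}
    (hX : ∀ ω, X' ω = f (X ω)) (Y : Ω → β) (Z : Ω → γ) : cmi p X' Y Z = cmi p X Y Z := by
  have hXZ : ent p (fun ω => (X' ω, Z ω)) = ent p (fun ω => (X ω, Z ω)) :=
    ent_eq_of_injective p (hf.prodMap Function.injective_id) fun ω => by rw [hX]; rfl
  have hXYZ : ent p (fun ω => ((X' ω, Y ω), Z ω)) = ent p (fun ω => ((X ω, Y ω), Z ω)) :=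
    ent_eq_of_injective p ((hf.prodMap Function.injective_id).prodMap Function.injective_id)
      fun ω => by rw [hX]; rfl
  rw [cmi, cmi, hXZ, hXYZ]

lemma cmi_congr_cond {f : γ → δ} (hf : Function.Injective f) (X : Ω → α) (Y : Ω → β)
    {Z' : Ω → δ} {Z : Ω → γ} (hZ : ∀ ω, Z' ω = f (Z ω)) : cmi p X Y Z' = cmi p X Y Z := by
  simp only [cmi, ent_prod_congr_right p hf _ hZ, ent_eq_of_injective p hf hZ]

end InformationMeasures

section ChainRule

variable (p : Ω → ℝ) {α β γ ε : Type*} [Fintype α] [Fintype β] [Fintype γ] [Fintype ε]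

lemma cmi_prod_left_eq_add (X : Ω → α) (B : Ω → ε) (Y : Ω → β) (Z : Ω → γ) :
    cmi p (fun ω => (X ω, B ω)) Y Z = cmi p B Y Z + cmi p X Y (fun ω => (Z ω, B ω)) := by
  have h₁ : ent p (fun ω => (X ω, (Z ω, B ω))) = ent p (fun ω => ((X ω, B ω), Z ω)) :=
    ent_eq_of_injective p (f := fun q => (q.1.1, (q.2, q.1.2)))
      (fun _ _ h => by simp_all [Prod.ext_iff]) fun _ => rfl
  have h₂ : ent p (fun ω => (Y ω, (Z ω, B ω))) = ent p (fun ω => ((B ω, Y ω), Z ω)) :=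
    ent_eq_of_injective p (f := fun q => (q.1.2, (q.2, q.1.1)))
      (fun _ _ h => by simp_all [Prod.ext_iff]) fun _ => rfl
  have h₃ : ent p (fun ω => ((X ω, Y ω), (Z ω, B ω)))
      = ent p (fun ω => (((X ω, B ω), Y ω), Z ω)) :=
    ent_eq_of_injective p (f := fun q => ((q.1.1.1, q.1.2), (q.2, q.1.1.2)))
      (fun _ _ h => by simp_all [Prod.ext_iff]) fun _ => rfl
  have h₄ : ent p (fun ω => (Z ω, B ω)) = ent p (fun ω => (B ω, Z ω)) :=
    ent_eq_of_injective p Prod.swap_injective fun _ => rfl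
  simp only [cmi, h₁, h₂, h₃, h₄]
  ring

lemma cmi_eq_cmi_add_cmi_of_markov {X : Ω → α} {Y : Ω → β} {B : Ω → ε} {Z : Ω → γ}
    (hmarkov : cmi p B Y (fun ω => (X ω, Z ω)) = 0) :
    cmi p X Y Z = cmi p Y B Z + cmi p X Y (fun ω => (Z ω, B ω)) := by
  have hXB := cmi_prod_left_eq_add p X B Y Z
  have hBX := cmi_prod_left_eq_add p B X Y Z
  have hswap : cmi p (fun ω => (B ω, X ω)) Y Z = cmi p (fun ω => (X ω, B ω)) Y Z :=
    cmi_congr_left p Prod.swap_injective (X := fun ω => (X ω, B ω)) (fun _ => rfl) Y Z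
  have hmarkov' : cmi p B Y (fun ω => (Z ω, X ω)) = 0 :=
    (cmi_congr_cond p Prod.swap_injective B Y (Z := fun ω => (X ω, Z ω)) fun _ => rfl).trans
      hmarkov
  rw [cmi_comm p Y B]
  linarith

end ChainRule

section Interactive

variable (p : Ω → ℝ) {𝒳 𝒴 𝒰 : Type*} [Fintype 𝒳] [Fintype 𝒴] [Fintype 𝒰] {r : ℕ}

omit [Fintype Ω] [Fintype 𝒰] in
lemma pre_succ (U : Fin r → Ω → 𝒰) {n : ℕ} (h : n < r) (ω : Ω) :
    pre U (n + 1) h ω = Fin.snoc (pre U n h.le ω) (U ⟨n, h⟩ ω) := by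
  funext k
  refine Fin.lastCases ?_ (fun i => ?_) k
  · simp only [Fin.snoc_last]
    rfl
  · simp only [Fin.snoc_castSucc]
    rfl

lemma cmi_pre_succ (X : Ω → 𝒳) (Y : Ω → 𝒴) (U : Fin r → Ω → 𝒰) {n : ℕ} (h : n < r) :
    cmi p X Y (pre U (n + 1) h) = cmi p X Y (fun ω => (pre U n h.le ω, U ⟨n, h⟩ ω)) :=
  cmi_congr_cond p Fin.snoc_injective2.uncurry X Y (pre_succ U h)

lemma P1cond.cmi_pre_eq_add {X : Ω → 𝒳} {Y : Ω → 𝒴} {U : Fin r → Ω → 𝒰}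
    (h1 : P1cond p X Y U) (j : Fin r) :
    cmi p X Y (pre U j j.isLt.le)
      = (if Even j.val
          then cmi p Y (U j) (pre U j.val j.isLt.le)
          else cmi p X (U j) (pre U j.val j.isLt.le))
        + cmi p X Y (pre U (j + 1) j.isLt) := by
  rw [cmi_pre_succ]
  split_ifs with hj
  · exact cmi_eq_cmi_add_cmi_of_markov p ((h1 j).1 hj)
  · simpa only [cmi_comm p Y X] using cmi_eq_cmi_add_cmi_of_markov p ((h1 j).2 hj)

end Interactive

/-- Under the interactive Markov conditions,
`Σ_{i odd} I(Y ∧ U_i | U^{i-1}) + Σ_{i even} I(X ∧ U_i | U^{i-1}) = I(X ∧ Y)`. -/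
theorem stmt12 {Ω 𝒳 𝒴 𝒰 : Type*} [Fintype Ω] [Fintype 𝒳] [Fintype 𝒴] [Fintype 𝒰] {r : ℕ}
    (p : Ω → ℝ) (hp : IsPMF p) (X : Ω → 𝒳) (Y : Ω → 𝒴) (U : Fin r → Ω → 𝒰)
    (h1 : P1cond p X Y U) (h2 : P2cond p X Y U) :
    (∑ j : Fin r,
        if Even j.val
        then cmi p Y (U j) (pre U j.val j.isLt.le)
        else cmi p X (U j) (pre U j.val j.isLt.le))
      = mi p X Y := by
  set I : ℕ → ℝ := fun k => if hk : k ≤ r then cmi p X Y (pre U k hk) else 0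
  have hstep : ∀ j : Fin r, (if Even j.val
        then cmi p Y (U j) (pre U j.val j.isLt.le)
        else cmi p X (U j) (pre U j.val j.isLt.le)) = I j - I (j + 1) := fun j => by
    simp only [I, dif_pos j.isLt.le, dif_pos (show (j : ℕ) + 1 ≤ r from j.isLt),
      h1.cmi_pre_eq_add p j, add_sub_cancel_right]
  calc _ = ∑ j : Fin r, (I j - I (j + 1)) := Finset.sum_congr rfl fun j _ => hstep j
    _ = I 0 - I r := by
      rw [Fin.sum_univ_eq_sum_range (fun k => I k - I (k + 1)), Finset.sum_range_sub']
    _ = mi p X Y := by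
      simp only [I, dif_pos (Nat.zero_le r), dif_pos le_rfl, cmi_eq_mi_of_unique p hp.2]
      rw [show cmi p X Y (pre U r le_rfl) = 0 from h2, sub_zero]
end
end
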